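/- arXiv:1905.05005 — 2 statements merged into one kernel-verified Lean document; each statement's English description precedes it below -/
import Mathlib

section
/- Let 1 ≤ p < ∞, 0 < α < n, and V ∈ L^p_loc(ℝⁿ) with η_{α,p}V(r) < ∞ for all r > 0. Then the Stummel p-modulus satisfies the doubling condition: there is a constant C = C(n, α) such that η_{α,p}V(2r) ≤ C · η_{α,p}V(r) for all r > 0. -/
/-!
Cover `ball x (2r)` by a fixed number `N` (depending only on the space) of balls `B` of radius
`r / 2`. Inside `ball x r` the mass is the Stummel integral at `x` of radius `r`. On
`B \ ball x r` every point is closer to any `w` within `r / 2` of the centre of `B` than to `x`,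
so the kernel centred at `x` is dominated by the one centred at `w`, and this piece is at most the
Stummel integral at `w` of radius `r`. Hence `η(2r)^p ≤ 2N η(r)^p`.

The Bochner integral in `η` is `0` wherever the Stummel integral is infinite, so `η(r)` only
bounds the finite values. This is enough: the Stummel integral is the convolution of a locally
integrable function with an integrable kernel, hence finite almost everywhere by Tonelli, and `w`
can be taken among these points.
-/

open MeasureTheory Metric

open scoped ENNReal

section Convolution

variable {G : Type*} [MeasurableSpace G] [AddGroup G] [MeasurableAdd₂ G] [MeasurableNeg G]
  {μ : Measure G} [μ.IsAddLeftInvariant] [SFinite μ]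

theorem lintegral_lconvolution {f g : G → ℝ≥0∞} (hf : AEMeasurable f μ)
    (hg : AEMeasurable g μ) :
    ∫⁻ x, (f ⋆ₗ[μ] g) x ∂μ = (∫⁻ y, f y ∂μ) * ∫⁻ z, g z ∂μ := by
  simp only [lconvolution_def]
  rw [lintegral_lintegral_swap (by fun_prop), ← lintegral_mul_const'' _ hf]
  congr 1 with y
  have hgy : AEMeasurable (fun x => g (-y + x)) μ :=
    hg.comp_quasiMeasurePreserving (measurePreserving_add_left μ (-y)).quasiMeasurePreserving
  rw [lintegral_const_mul'' _ hgy, lintegral_add_left_eq_self g (-y)]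

end Convolution

theorem exists_finset_ball_two_mul_subset_iUnion {E : Type*} [NormedAddCommGroup E]
    [NormedSpace ℝ E] [ProperSpace E] :
    ∃ T : Finset E, ∀ (x : E) {r : ℝ}, 0 < r →
      ball x (2 * r) ⊆ ⋃ c ∈ T, ball (x + r • c) (r / 2) := by
  obtain ⟨T, hT⟩ := (isCompact_closedBall (0 : E) 2).elim_finite_subcover
    (fun c : E => ball c (1 / 2)) (fun _ => isOpen_ball)
    (fun w _ => Set.mem_iUnion.2 ⟨w, mem_ball_self (by norm_num)⟩)
  refine ⟨T, fun x r hr y hy => ?_⟩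
  have hy' : r⁻¹ • (y - x) ∈ closedBall (0 : E) 2 := by
    rw [mem_closedBall_zero_iff, norm_smul, norm_inv, Real.norm_of_nonneg hr.le,
      inv_mul_le_iff₀ hr, ← dist_eq_norm]
    linarith [mem_ball.1 hy]
  obtain ⟨c, hcT, hc⟩ := Set.mem_iUnion₂.1 (hT hy')
  refine Set.mem_biUnion hcT ?_
  have hscale : y - (x + r • c) = r • (r⁻¹ • (y - x) - c) := by
    rw [smul_sub, smul_smul, mul_inv_cancel₀ hr.ne', one_smul]
    abel
  rw [mem_ball] at hc ⊢
  rw [dist_eq_norm, hscale, norm_smul, Real.norm_of_nonneg hr.le, ← dist_eq_norm]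
  linarith [mul_lt_mul_of_pos_left hc hr]

variable {E : Type*} [NormedAddCommGroup E] [MeasurableSpace E]

/-- `η_{α,p}V(r) ^ p` is the supremum over `x` of the `toReal` of
`stummelIntegral volume (n - α) (fun y => ‖|V y| ^ p‖ₑ) x r`. -/
noncomputable def stummelIntegral (μ : Measure E) (s : ℝ) (f : E → ℝ≥0∞) (x : E) (r : ℝ) :
    ℝ≥0∞ :=
  ∫⁻ y in ball x r, f y * ENNReal.ofReal (‖x - y‖ ^ (-s)) ∂μ

variable {μ : Measure E} {s : ℝ} {f : E → ℝ≥0∞}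

theorem stummelIntegral_mono_radius (x : E) {r r' : ℝ} (h : r ≤ r') :
    stummelIntegral μ s f x r ≤ stummelIntegral μ s f x r' :=
  lintegral_mono_set (ball_subset_ball h)

theorem stummelIntegral_eq_lconvolution [OpensMeasurableSpace E] (x : E) (r : ℝ) :
    stummelIntegral μ s f x r =
      (f ⋆ₗ[μ] (ball 0 r).indicator fun z => ENNReal.ofReal (‖z‖ ^ (-s))) x := by
  rw [stummelIntegral, lconvolution_def, ← lintegral_indicator measurableSet_ball]
  congr 1 with y
  have hmem : x - y ∈ ball (0 : E) r ↔ y ∈ ball x r := by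
    rw [mem_ball_zero_iff, mem_ball, dist_comm, dist_eq_norm]
  rw [neg_add_eq_sub]
  by_cases hy : y ∈ ball x r
  · rw [Set.indicator_of_mem hy, Set.indicator_of_mem (hmem.2 hy)]
  · rw [Set.indicator_of_notMem hy, Set.indicator_of_notMem (mt hmem.1 hy), mul_zero]

theorem setLIntegral_ball_diff_ball_le_stummelIntegral [OpensMeasurableSpace E]
    [NullSingletonClass μ] (hs : 0 ≤ s) {x c w : E} {r : ℝ} (hw : dist w c < r / 2) :
    ∫⁻ y in ball c (r / 2) \ ball x r, f y * ENNReal.ofReal (‖x - y‖ ^ (-s)) ∂μ ≤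
      stummelIntegral μ s f w r := by
  have hsub : ball c (r / 2) ⊆ ball w r := fun y hy => by
    rw [mem_ball] at hy ⊢
    linarith [dist_triangle y c w, dist_comm w c]
  refine (setLIntegral_mono_ae' (measurableSet_ball.diff measurableSet_ball) ?_).trans
    (lintegral_mono_set (Set.sdiff_subset.trans hsub))
  filter_upwards [Measure.ae_ne μ w] with y hyw ⟨hyc, hyx⟩
  have hwy : ‖w - y‖ ≤ ‖x - y‖ := by
    rw [← dist_eq_norm, ← dist_eq_norm, dist_comm w, dist_comm x]
    exact ((mem_ball.1 (hsub hyc)).trans_le (not_lt.1 hyx)).le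
  exact mul_le_mul_right (ENNReal.ofReal_le_ofReal <|
    Real.rpow_le_rpow_of_nonpos (norm_pos_iff.2 (sub_ne_zero.2 hyw.symm)) hwy (by linarith)) _

section Doubling

variable [NormedSpace ℝ E] [OpensMeasurableSpace E] [μ.IsOpenPosMeasure]
  [NullSingletonClass μ] {T : Finset E}

theorem stummelIntegral_two_mul_le (hs : 0 ≤ s)
    (hT : ∀ (x : E) {r : ℝ}, 0 < r → ball x (2 * r) ⊆ ⋃ c ∈ T, ball (x + r • c) (r / 2))
    {r : ℝ} (hr : 0 < r) {M : ℝ≥0∞} (hM : ∀ᵐ w ∂μ, stummelIntegral μ s f w r ≤ M) (x : E) :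
    stummelIntegral μ s f x (2 * r) ≤ T.card * (stummelIntegral μ s f x r + M) := by
  set ν := μ.withDensity fun y => f y * ENNReal.ofReal (‖x - y‖ ^ (-s))
  have hν : ∀ {t : Set E}, MeasurableSet t →
      ν t = ∫⁻ y in t, f y * ENNReal.ofReal (‖x - y‖ ^ (-s)) ∂μ :=
    fun ht => withDensity_apply _ ht
  have hpiece : ∀ c : E, ν (ball c (r / 2)) ≤ stummelIntegral μ s f x r + M := by
    intro c
    obtain ⟨w, hwc, hwM⟩ := Measure.exists_mem_of_measure_ne_zero_of_ae
      (measure_ball_pos μ c (half_pos hr)).ne' (ae_restrict_of_ae hM)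
    calc ν (ball c (r / 2))
        ≤ ν (ball c (r / 2) ∩ ball x r) + ν (ball c (r / 2) \ ball x r) :=
          measure_le_inter_add_sdiff _ _ _
      _ ≤ ν (ball x r) + stummelIntegral μ s f w r := by
          gcongr ?_ + ?_
          · exact measure_mono Set.inter_subset_right
          · rw [hν (measurableSet_ball.diff measurableSet_ball)]
            exact setLIntegral_ball_diff_ball_le_stummelIntegral hs (mem_ball.1 hwc)
      _ ≤ _ := add_le_add (hν measurableSet_ball).le hwM
  calc stummelIntegral μ s f x (2 * r)
      = ν (ball x (2 * r)) := (hν measurableSet_ball).symm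
    _ ≤ ∑ c ∈ T, ν (ball (x + r • c) (r / 2)) :=
        (measure_mono (hT x hr)).trans (measure_biUnion_finset_le T _)
    _ ≤ ∑ c ∈ T, (stummelIntegral μ s f x r + M) := Finset.sum_le_sum fun c _ => hpiece _
    _ = T.card * (stummelIntegral μ s f x r + M) := by rw [Finset.sum_const, nsmul_eq_mul]

theorem toReal_stummelIntegral_two_mul_le (hs : 0 ≤ s)
    (hT : ∀ (x : E) {r : ℝ}, 0 < r → ball x (2 * r) ⊆ ⋃ c ∈ T, ball (x + r • c) (r / 2))
    {r : ℝ} (hr : 0 < r) {M : ℝ} (hM0 : 0 ≤ M)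
    (hM : ∀ w, (stummelIntegral μ s f w r).toReal ≤ M)
    (hfin : ∀ᵐ w ∂μ, stummelIntegral μ s f w r < ∞) (x : E) :
    (stummelIntegral μ s f x (2 * r)).toReal ≤ 2 * T.card * M := by
  have hM' : ∀ w, stummelIntegral μ s f w r ≠ ∞ →
      stummelIntegral μ s f w r ≤ ENNReal.ofReal M :=
    fun w hw => (ENNReal.le_ofReal_iff_toReal_le hw hM0).2 (hM w)
  rcases eq_or_ne (stummelIntegral μ s f x (2 * r)) ∞ with htop | hne
  · rw [htop, ENNReal.toReal_top]
    positivity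
  have hx : stummelIntegral μ s f x r ≤ ENNReal.ofReal M :=
    hM' x ((stummelIntegral_mono_radius x (by linarith)).trans_lt hne.lt_top).ne
  have hdouble := stummelIntegral_two_mul_le hs hT hr (hfin.mono fun w hw => hM' w hw.ne) x
  calc (stummelIntegral μ s f x (2 * r)).toReal
      ≤ (T.card * (ENNReal.ofReal M + ENNReal.ofReal M)).toReal :=
        ENNReal.toReal_mono (by finiteness) (hdouble.trans (by gcongr))
    _ = 2 * T.card * M := by
        rw [ENNReal.toReal_mul, ENNReal.toReal_add ENNReal.ofReal_ne_top ENNReal.ofReal_ne_top,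
          ENNReal.toReal_ofReal hM0, ENNReal.toReal_natCast]
        ring

end Doubling

section FiniteDimensional

variable [NormedSpace ℝ E] [FiniteDimensional ℝ E] [BorelSpace E] [μ.IsAddHaarMeasure]

theorem setLIntegral_ball_ofReal_norm_rpow_neg_lt_top (hd : 1 ≤ Module.finrank ℝ E)
    (hs : s < Module.finrank ℝ E) (c : E) (r : ℝ) :
    ∫⁻ z in ball c r, ENNReal.ofReal (‖z‖ ^ (-s)) ∂μ < ∞ := by
  have hloc : LocallyIntegrable (fun z : E => ‖z‖ ^ (-s)) μ :=
    locallyIntegrable_of_norm_le_rpow hd hs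
      (ae_of_all _ fun z => by rw [one_mul, Real.norm_of_nonneg (by positivity)])
      (measurable_norm.pow_const _).aestronglyMeasurable
  exact ((hloc.integrableOn_isCompact (isCompact_closedBall c r)).mono_set
    ball_subset_closedBall).lintegral_lt_top

theorem ae_stummelIntegral_lt_top (hd : 1 ≤ Module.finrank ℝ E) (hs : s < Module.finrank ℝ E)
    (hf : LocallyIntegrable f μ) (r : ℝ) : ∀ᵐ x ∂μ, stummelIntegral μ s f x r < ∞ := by
  set k := (ball (0 : E) r).indicator fun z => ENNReal.ofReal (‖z‖ ^ (-s))
  have hk : AEMeasurable k μ :=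
    ((measurable_norm.pow_const _).ennreal_ofReal.indicator measurableSet_ball).aemeasurable
  have hk_int : ∫⁻ z, k z ∂μ ≠ ∞ := by
    rw [lintegral_indicator measurableSet_ball]
    exact (setLIntegral_ball_ofReal_norm_rpow_neg_lt_top hd hs 0 r).ne
  suffices ∀ R : ℕ, ∀ᵐ x ∂μ.restrict (ball 0 R), stummelIntegral μ s f x r < ∞ by
    have h := (ae_restrict_iUnion_iff _ _).2 this
    rwa [iUnion_ball_nat, Measure.restrict_univ] at h
  intro R
  -- only the values of `f` on `ball 0 (R + r)` matter for `x ∈ ball 0 R`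
  set g := (ball (0 : E) (R + r)).indicator f
  have hg : AEMeasurable g μ :=
    hf.aestronglyMeasurable.aemeasurable.indicator measurableSet_ball
  have hg_int : ∫⁻ y, g y ∂μ ≠ ∞ := by
    rw [lintegral_indicator measurableSet_ball]
    simpa only [enorm_eq_self] using ((hf.integrableOn_isCompact
      (isCompact_closedBall 0 (R + r))).mono_set ball_subset_closedBall).2.ne
  have hconv : ∀ᵐ x ∂μ, (g ⋆ₗ[μ] k) x < ∞ :=
    ae_lt_top' (aemeasurable_lconvolution hg hk)
      (by rw [lintegral_lconvolution hg hk]; exact ENNReal.mul_ne_top hg_int hk_int)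
  filter_upwards [ae_restrict_of_ae hconv, ae_restrict_mem measurableSet_ball] with x hx hxR
  have hfg : stummelIntegral μ s f x r = stummelIntegral μ s g x r := by
    refine setLIntegral_congr_fun measurableSet_ball fun y hy => ?_
    have hyR : y ∈ ball (0 : E) (R + r) := by
      rw [mem_ball_zero_iff] at hxR ⊢
      linarith [norm_le_norm_add_norm_sub' y x, mem_ball.1 hy, dist_eq_norm y x]
    rw [show g y = f y from Set.indicator_of_mem hyR f]
  rwa [hfg, stummelIntegral_eq_lconvolution]

end FiniteDimensional

theorem integral_ball_div_rpow_eq_toReal_stummelIntegral [NormedSpace ℝ E] [BorelSpace E]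
    {g : E → ℝ} (hg : 0 ≤ g) (hgm : AEStronglyMeasurable g μ) (s : ℝ) (x : E) (r : ℝ) :
    ∫ y in ball x r, g y / ‖x - y‖ ^ s ∂μ =
      (stummelIntegral μ s (fun y => ‖g y‖ₑ) x r).toReal := by
  have hker : Measurable fun y : E => ‖x - y‖ ^ s :=
    (continuous_const.sub continuous_id).norm.measurable.pow_const s
  rw [integral_eq_lintegral_of_nonneg_ae
    (ae_of_all _ fun y => div_nonneg (hg y) (by positivity))
    (hgm.aemeasurable.div hker.aemeasurable).aestronglyMeasurable.restrict]
  congr 1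
  refine lintegral_congr fun y => ?_
  dsimp only
  rw [div_eq_mul_inv, ← Real.rpow_neg (norm_nonneg _), ENNReal.ofReal_mul (hg y),
    Real.enorm_eq_ofReal (hg y)]

/-- doubling condition for the Stummel p-modulus
η_{α,p}V(r) = sup_x (∫_{|x-y|<r} |V y|^p / |x-y|^{n-α} dy)^{1/p}. -/
theorem stmt_1 (n : ℕ) (p α : ℝ) (hp : 1 ≤ p) (hα0 : 0 < α) (hαn : α < n)
    (V : EuclideanSpace ℝ (Fin n) → ℝ)
    (hVloc : LocallyIntegrable (fun y => |V y| ^ p)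
      (volume : Measure (EuclideanSpace ℝ (Fin n))))
    (η : ℝ → ℝ)
    (hη : ∀ r : ℝ, η r = ⨆ x : EuclideanSpace ℝ (Fin n),
      (∫ y in ball x r, |V y| ^ p / ‖x - y‖ ^ ((n : ℝ) - α)) ^ (1 / p))
    (hfin : ∀ r : ℝ, 0 < r → BddAbove (Set.range fun x : EuclideanSpace ℝ (Fin n) =>
      (∫ y in ball x r, |V y| ^ p / ‖x - y‖ ^ ((n : ℝ) - α)) ^ (1 / p))) :
    ∃ C : ℝ, 0 < C ∧ ∀ r : ℝ, 0 < r → η (2 * r) ≤ C * η r := by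
  have hp0 : 0 < p := by linarith
  have hdim : 1 ≤ Module.finrank ℝ (EuclideanSpace ℝ (Fin n)) := by
    rw [finrank_euclideanSpace_fin, Nat.one_le_iff_ne_zero]
    rintro rfl
    simp only [CharP.cast_eq_zero] at hαn
    linarith
  have : Nontrivial (EuclideanSpace ℝ (Fin n)) := Module.nontrivial_of_finrank_pos hdim
  set I := stummelIntegral volume ((n : ℝ) - α) fun y => ‖|V y| ^ p‖ₑ
  have hI : ∀ x r, ∫ y in ball x r, |V y| ^ p / ‖x - y‖ ^ ((n : ℝ) - α) = (I x r).toReal :=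
    integral_ball_div_rpow_eq_toReal_stummelIntegral (fun y => by positivity)
      hVloc.aestronglyMeasurable _
  have hI_fin : ∀ r, ∀ᵐ x, I x r < ∞ := ae_stummelIntegral_lt_top hdim
    (by rw [finrank_euclideanSpace_fin]; linarith)
    (locallyIntegrableOn_univ.1 (hVloc.locallyIntegrableOn _).enorm)
  obtain ⟨T, hT⟩ := exists_finset_ball_two_mul_subset_iUnion (E := EuclideanSpace ℝ (Fin n))
  have hT0 : 0 < T.card := by
    obtain ⟨c, hc, -⟩ := Set.mem_iUnion₂.1 (hT 0 one_pos (mem_ball_self (by norm_num)))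
    exact Finset.card_pos.2 ⟨c, hc⟩
  refine ⟨(2 * T.card) ^ (1 / p), by positivity, fun r hr => ?_⟩
  have hle : ∀ x, (I x r).toReal ^ (1 / p) ≤ η r := fun x => by
    rw [← hI, hη]
    exact le_ciSup (hfin r hr) x
  have hη0 : 0 ≤ η r := (Real.rpow_nonneg ENNReal.toReal_nonneg _).trans (hle 0)
  have hdouble : ∀ x, (I x (2 * r)).toReal ≤ 2 * T.card * η r ^ p :=
    toReal_stummelIntegral_two_mul_le (by linarith) hT hr (by positivity)
      (fun w => (Real.rpow_inv_le_iff_of_pos ENNReal.toReal_nonneg hη0 hp0).1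
        (by simpa only [one_div] using hle w)) (hI_fin r)
  rw [hη]
  refine ciSup_le fun x => ?_
  calc (∫ y in ball x (2 * r), |V y| ^ p / ‖x - y‖ ^ ((n : ℝ) - α)) ^ (1 / p)
      ≤ (2 * T.card * η r ^ p) ^ (1 / p) := by
        rw [hI]
        gcongr
        exact hdouble x
    _ = (2 * T.card) ^ (1 / p) * η r := by
        rw [Real.mul_rpow (by positivity) (by positivity), ← Real.rpow_mul hη0,
          mul_one_div_cancel hp0.ne', Real.rpow_one]
end

section
/- Let 0 < α < n, 1 < p < n/α. Define V₁(y) = |y|^{−α} on ℝⁿ \ {0}. Then V₁ belongs to the classical Morrey space L^{p, n−αp}(ℝⁿ), i.e. sup_{x∈ℝⁿ, r>0} r^{−(n−αp)} ∫_{|x−y|<r} |y|^{−αp} dy < ∞, but V₁ ∉ S̃_{α,p}, i.e. there exists r > 0 with sup_{x∈ℝⁿ} ∫_{|x−y|<r} |y|^{−αp}/|x−y|^{n−α} dy = ∞. -/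
/-!
In polar coordinates, `‖x‖ ^ (-s)` is integrable on a ball about `0` in dimension `d` exactly when
`∫₀ʳ t ^ (d - 1 - s) dt < ∞`, i.e. when `s < d`. For `s = α p < n`, scaling gives
`∫_{B(0,r)} ‖y‖ ^ (-s) = r ^ (n - s) ∫_{B(0,1)} ‖y‖ ^ (-s)`, and a ball `B(x,r)` splits into
its part inside `B(0,r)` and a part on which `‖y‖ ≥ r`; together this is the Morrey bound. At the
centre `x = 0` the Stummel integrand is `‖y‖ ^ (-(α p + n - α))`, whose exponent is at least `n`
because `p > 1`, so its integral over the unit ball diverges.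
-/

open MeasureTheory Metric Set Module

namespace MeasureTheory

variable {E : Type*} [NormedAddCommGroup E] [NormedSpace ℝ E] [FiniteDimensional ℝ E]
  [MeasurableSpace E] [BorelSpace E] (μ : Measure E) [μ.IsAddHaarMeasure]

lemma integrableOn_ball_norm_rpow_neg_iff [Nontrivial E] {s r : ℝ} (hr : 0 < r) :
    IntegrableOn (fun x : E ↦ ‖x‖ ^ (-s)) (ball 0 r) μ ↔ s < finrank ℝ E := by
  rw [integrableOn_fun_norm_addHaar μ (f := fun t ↦ t ^ (-s)),
    integrableOn_congr_fun (g := fun t ↦ t ^ ((finrank ℝ E : ℝ) - 1 - s)) ?_ measurableSet_Ioo,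
    intervalIntegral.integrableOn_Ioo_rpow_iff hr]
  · constructor <;> intro h <;> linarith
  · intro t ht
    dsimp only
    rw [smul_eq_mul, ← Real.rpow_natCast, Nat.cast_sub finrank_pos, Nat.cast_one,
      ← Real.rpow_add ht.1, sub_eq_add_neg (_ - 1)]

lemma setIntegral_ball_zero_norm_rpow_neg (s : ℝ) {r : ℝ} (hr : 0 < r) :
    ∫ x in ball (0 : E) r, ‖x‖ ^ (-s) ∂μ
      = r ^ ((finrank ℝ E : ℝ) - s) * ∫ x in ball (0 : E) 1, ‖x‖ ^ (-s) ∂μ := by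
  have h := Measure.setIntegral_comp_smul_of_pos μ (fun x : E ↦ ‖x‖ ^ (-s)) (ball 0 1) hr
  simp only [norm_smul, Real.norm_of_nonneg hr.le, Real.mul_rpow hr.le (norm_nonneg _),
    integral_const_mul, smul_unitBall_of_pos hr, smul_eq_mul] at h
  have hrd : r ^ finrank ℝ E ≠ 0 := by positivity
  calc ∫ x in ball (0 : E) r, ‖x‖ ^ (-s) ∂μ
      = r ^ finrank ℝ E * ((r ^ finrank ℝ E)⁻¹ * ∫ x in ball (0 : E) r, ‖x‖ ^ (-s) ∂μ) := by
        field_simp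
    _ = _ := by rw [← h, Real.rpow_sub hr, Real.rpow_natCast, Real.rpow_neg hr.le]; ring

lemma setIntegral_ball_norm_rpow_neg_le [Nontrivial E] {s : ℝ} (hs : 0 ≤ s)
    (hsd : s < finrank ℝ E) (x : E) {r : ℝ} (hr : 0 < r) :
    ∫ y in ball x r, ‖y‖ ^ (-s) ∂μ
      ≤ r ^ ((finrank ℝ E : ℝ) - s) *
          (∫ y in ball (0 : E) 1, ‖y‖ ^ (-s) ∂μ + μ.real (ball 0 1)) := by
  have hint : ∀ R, 0 < R → IntegrableOn (fun y : E ↦ ‖y‖ ^ (-s)) (ball 0 R) μ :=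
    fun R hR ↦ (integrableOn_ball_norm_rpow_neg_iff μ hR).2 hsd
  have hint_x : IntegrableOn (fun y : E ↦ ‖y‖ ^ (-s)) (ball x r) μ :=
    (hint (r + ‖x‖) (by positivity)).mono_set (ball_subset_ball' (by simp))
  have hfar : ∀ y ∈ ball x r \ ball 0 r, ‖‖y‖ ^ (-s)‖ ≤ r ^ (-s) := fun y hy ↦ by
    have hry : r ≤ ‖y‖ := by simpa using hy.2
    rw [Real.norm_of_nonneg (by positivity)]
    exact Real.rpow_le_rpow_of_nonpos hr hry (neg_nonpos.2 hs)
  have hvol : μ.real (ball x r) = r ^ finrank ℝ E * μ.real (ball 0 1) := by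
    rw [measureReal_def, Measure.addHaar_ball_of_pos μ x hr, ENNReal.toReal_mul,
      ENNReal.toReal_ofReal (by positivity), measureReal_def]
  calc ∫ y in ball x r, ‖y‖ ^ (-s) ∂μ
      = ∫ y in ball x r ∩ ball 0 r, ‖y‖ ^ (-s) ∂μ + ∫ y in ball x r \ ball 0 r, ‖y‖ ^ (-s) ∂μ :=
        (integral_inter_add_sdiff measurableSet_ball hint_x).symm
    _ ≤ ∫ y in ball 0 r, ‖y‖ ^ (-s) ∂μ + r ^ (-s) * μ.real (ball x r) := by
        refine add_le_add (setIntegral_mono_set (hint r hr) (ae_of_all _ fun y ↦ by positivity)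
          inter_subset_right.eventuallyLE) ?_
        calc _ ≤ ‖∫ y in ball x r \ ball 0 r, ‖y‖ ^ (-s) ∂μ‖ := le_abs_self _
          _ ≤ r ^ (-s) * μ.real (ball x r \ ball 0 r) :=
            norm_setIntegral_le_of_norm_le_const
              ((measure_mono sdiff_subset).trans_lt measure_ball_lt_top) hfar
          _ ≤ r ^ (-s) * μ.real (ball x r) := by
            gcongr
            exacts [measure_ball_lt_top.ne, sdiff_subset]
    _ = _ := by
        rw [setIntegral_ball_zero_norm_rpow_neg μ s hr, hvol, Real.rpow_sub hr, Real.rpow_natCast,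
          Real.rpow_neg hr.le]
        ring

lemma lintegral_ball_norm_rpow_neg_eq_top [Nontrivial E] {s r : ℝ} (hsd : finrank ℝ E ≤ s)
    (hr : 0 < r) : ∫⁻ x in ball (0 : E) r, ENNReal.ofReal (‖x‖ ^ (-s)) ∂μ = ⊤ := by
  by_contra h
  refine hsd.not_gt ((integrableOn_ball_norm_rpow_neg_iff μ hr).1 ?_)
  exact (lintegral_ofReal_ne_top_iff_integrable
    (measurable_norm.pow_const _).aestronglyMeasurable (ae_of_all _ fun x ↦ by positivity)).1 h

end MeasureTheory

theorem stmt_18_general (n : ℕ) (α p : ℝ) (hα0 : 0 < α)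
    (hp1 : 1 < p) (hpn : p < (n : ℝ) / α) :
    (∃ C : ℝ, 0 < C ∧ ∀ (x : EuclideanSpace ℝ (Fin n)) (r : ℝ), 0 < r →
        r ^ (-((n : ℝ) - α * p)) * ∫ y in ball x r, ‖y‖ ^ (-(α * p)) ≤ C) ∧
    (∃ r : ℝ, 0 < r ∧
      (⨆ x : EuclideanSpace ℝ (Fin n),
        ∫⁻ y in ball x r,
          ENNReal.ofReal (‖y‖ ^ (-(α * p)) / ‖x - y‖ ^ ((n : ℝ) - α))) = ⊤) := by
  have hβn : α * p < finrank ℝ (EuclideanSpace ℝ (Fin n)) := by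
    rwa [finrank_euclideanSpace_fin, mul_comm, ← lt_div_iff₀ hα0]
  have hβ0 : 0 ≤ α * p := by positivity
  have : Nontrivial (EuclideanSpace ℝ (Fin n)) :=
    Module.nontrivial_of_finrank_pos (R := ℝ) (by exact_mod_cast hβ0.trans_lt hβn)
  have hd : (finrank ℝ (EuclideanSpace ℝ (Fin n)) : ℝ) = n := by
    rw [finrank_euclideanSpace_fin]
  set K := (∫ y in ball (0 : EuclideanSpace ℝ (Fin n)) 1, ‖y‖ ^ (-(α * p)))
    + volume.real (ball (0 : EuclideanSpace ℝ (Fin n)) 1)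
  refine ⟨⟨K, ?_, fun x r hr ↦ ?_⟩, 1, one_pos, ?_⟩
  · exact add_pos_of_nonneg_of_pos (setIntegral_nonneg measurableSet_ball fun y _ ↦ by positivity)
      (ENNReal.toReal_pos (measure_ball_pos _ _ one_pos).ne' measure_ball_lt_top.ne)
  · have h := setIntegral_ball_norm_rpow_neg_le volume hβ0 hβn x hr
    rw [hd] at h
    calc r ^ (-((n : ℝ) - α * p)) * ∫ y in ball x r, ‖y‖ ^ (-(α * p))
        ≤ r ^ (-((n : ℝ) - α * p)) * (r ^ ((n : ℝ) - α * p) * K) := by gcongr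
      _ = K := by rw [← mul_assoc, ← Real.rpow_add hr, neg_add_cancel, Real.rpow_zero, one_mul]
  · have hγ : (finrank ℝ (EuclideanSpace ℝ (Fin n)) : ℝ) ≤ α * p + (n - α) := by
      rw [hd]; nlinarith
    have hkernel : ∀ y : EuclideanSpace ℝ (Fin n),
        ‖y‖ ^ (-(α * p + (n - α))) = ‖y‖ ^ (-(α * p)) / ‖0 - y‖ ^ ((n : ℝ) - α) := fun y ↦ by
      rw [zero_sub, norm_neg, ← Real.rpow_sub' (norm_nonneg y) (by linarith), neg_add']
    refine top_unique ((lintegral_ball_norm_rpow_neg_eq_top volume hγ one_pos).ge.trans ?_)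
    simp only [hkernel]
    exact le_iSup_of_le 0 le_rfl

/-- V₁(y) = |y|^{−α} belongs to the classical Morrey space
L^{p, n−αp} but not to the bounded Stummel modulus class S̃_{α,p}
(its Stummel modulus is infinite for some r > 0). -/
theorem stmt_18 (n : ℕ) (α p : ℝ) (hα0 : 0 < α) (hαn : α < n)
    (hp1 : 1 < p) (hpn : p < (n : ℝ) / α) :
    (∃ C : ℝ, 0 < C ∧ ∀ (x : EuclideanSpace ℝ (Fin n)) (r : ℝ), 0 < r →
        r ^ (-((n : ℝ) - α * p)) * ∫ y in ball x r, ‖y‖ ^ (-(α * p)) ≤ C) ∧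
    (∃ r : ℝ, 0 < r ∧
      (⨆ x : EuclideanSpace ℝ (Fin n),
        ∫⁻ y in ball x r,
          ENNReal.ofReal (‖y‖ ^ (-(α * p)) / ‖x - y‖ ^ ((n : ℝ) - α))) = ⊤) :=
  stmt_18_general n α p hα0 hp1 hpn
end
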